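/- (Perturbation stability of decoupling under smoothing of the superoperator.) Let T and T' be completely positive superoperators from A₁⊗A₂ to B whose Choi states τ, τ' satisfy ‖τ' − τ‖₁ ≤ ε. Then for any normalized density matrix ρ^{A₁A₂R}, E_{U₁,U₂}[‖((T' − T) ⊗ I^R)((U₁ ⊗ U₂ ⊗ 1^R) ρ^{A₁A₂R} (U₁ ⊗ U₂ ⊗ 1^R)†)‖₁] ≤ ε, where the expectation is over independent Haar-random unitaries U₁ on A₁, U₂ on A₂. -/

import Mathlib

open Matrix MeasureTheory
open scoped ComplexOrder BigOperators

noncomputable section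

variable {n : Type*} [Fintype n] [DecidableEq n]

/-- Frobenius / Schatten-2 norm. -/
def frob (M : Matrix n n ℂ) : ℝ := Real.sqrt (Mᴴ * M).trace.re

/-- Trace / Schatten-1 norm. -/
def trNorm (M : Matrix n n ℂ) : ℝ :=
  (((Matrix.posSemidef_conjTranspose_mul_self M).1.eigenvectorUnitary : Matrix n n ℂ) *
    Matrix.diagonal (fun i =>
      ((Real.sqrt ((Matrix.posSemidef_conjTranspose_mul_self M).1.eigenvalues i) : ℝ) : ℂ)) *
    (star (Matrix.posSemidef_conjTranspose_mul_self M).1.eigenvectorUnitary : Matrix n n ℂ)).trace.re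

/-- Real power of a Hermitian matrix via the spectral decomposition, sending zero
eigenvalues to zero (hence Moore–Penrose pseudoinverse powers for negative exponents);
junk value `0` for non-Hermitian input. -/
def mpow (M : Matrix n n ℂ) (r : ℝ) : Matrix n n ℂ :=
  if h : M.IsHermitian then
    (h.eigenvectorUnitary : Matrix n n ℂ) *
      Matrix.diagonal (fun i =>
        ((if h.eigenvalues i = 0 then (0:ℝ) else h.eigenvalues i ^ r : ℝ) : ℂ)) *
      (h.eigenvectorUnitary : Matrix n n ℂ)ᴴ
  else 0

/-- Operator (Schatten-∞) norm. -/
def opNorm (M : Matrix n n ℂ) : ℝ := ‖(Matrix.toEuclideanLin M).toContinuousLinearMap‖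

/-- Support of a matrix, i.e. its range as a linear map. -/
def supp (M : Matrix n n ℂ) : Submodule ℂ (n → ℂ) := LinearMap.range M.mulVecLin

/-- Rényi-2 divergence (base 2). -/
def D2 (α β : Matrix n n ℂ) : ℝ :=
  2 * Real.logb 2 (frob (mpow β (-(1/4)) * α * mpow β (-(1/4))))

/-- Max (Rényi-∞) divergence (base 2). -/
def Dinf (α β : Matrix n n ℂ) : ℝ :=
  Real.logb 2 (opNorm (mpow β (-(1/2)) * α * mpow β (-(1/2))))

/-- Kronecker / tensor product of square matrices, on the product index type. -/
def kron {m : Type*} (P : Matrix n n ℂ) (Q : Matrix m m ℂ) : Matrix (n × m) (n × m) ℂ :=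
  fun z w => P z.1 w.1 * Q z.2 w.2

/-- Measurable space structure on matrices (entrywise Borel). -/
instance matrixMeasurableSpace {m n : Type*} [Fintype m] [Fintype n] :
    MeasurableSpace (Matrix m n ℂ) := by unfold Matrix; infer_instance

/-- Normalized Choi state of a superoperator, i.e.
`(T ⊗ I)(Φ^{A'A})` where `Φ` is the normalized maximally entangled state. -/
def choi {A B : Type*} [Fintype A] [DecidableEq A] [Fintype B]
    (T : Matrix A A ℂ →ₗ[ℂ] Matrix B B ℂ) : Matrix (A × B) (A × B) ℂ :=
  fun z w => ((Fintype.card A : ℂ))⁻¹ * T (Matrix.single z.1 w.1 1) z.2 w.2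

/-- `T ⊗ I^R` applied to a matrix on `A ⊗ R`. -/
def tensId {A B R : Type*} [Fintype A] [DecidableEq A] [Fintype B] [Fintype R]
    (T : Matrix A A ℂ →ₗ[ℂ] Matrix B B ℂ) (ρ : Matrix (A × R) (A × R) ℂ) :
    Matrix (B × R) (B × R) ℂ :=
  fun z w => ∑ i, ∑ j, T (Matrix.single i j 1) z.1 w.1 * ρ (i, z.2) (j, w.2)

/-- The operator `U₁ ⊗ U₂ ⊗ 1^R`. -/
def bigUR {n₁ n₂ R : Type*} [DecidableEq R] (U₁ : Matrix n₁ n₁ ℂ) (U₂ : Matrix n₂ n₂ ℂ) :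
    Matrix ((n₁ × n₂) × R) ((n₁ × n₂) × R) ℂ :=
  fun z w => U₁ z.1.1 w.1.1 * U₂ z.1.2 w.1.2 * (if z.2 = w.2 then (1:ℂ) else 0)

/-- Conjugation of a state on `A₁ ⊗ A₂ ⊗ R` by `U₁ ⊗ U₂ ⊗ 1`. -/
def conjU {n₁ n₂ R : Type*} [Fintype n₁] [Fintype n₂] [Fintype R] [DecidableEq R]
    (U₁ : Matrix n₁ n₁ ℂ) (U₂ : Matrix n₂ n₂ ℂ)
    (ρ : Matrix ((n₁ × n₂) × R) ((n₁ × n₂) × R) ℂ) :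
    Matrix ((n₁ × n₂) × R) ((n₁ × n₂) × R) ℂ :=
  bigUR U₁ U₂ * ρ * (bigUR U₁ U₂)ᴴ

/-- Partial trace over the first tensor factor. -/
def ptrFst {A R : Type*} [Fintype A] (ρ : Matrix (A × R) (A × R) ℂ) : Matrix R R ℂ :=
  fun r r' => ∑ a, ρ (a, r) (a, r')


/-! Split `choi T' - choi T = P - N` with `P, N ⪰ 0` and `tr P + tr N = ‖choi T' - choi T‖₁`. For
every input state `σ`, `((T' - T) ⊗ id) σ` is the difference of the outputs of the completely
positive maps with Choi matrices `P` and `N`, so its trace norm is at most the trace of the output of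
the map with Choi matrix `P + N`, a quantity linear in `σ`. Its Haar average therefore only sees the
average reduced state of `(U₁ ⊗ U₂) σ^{A₁A₂} (U₁ ⊗ U₂)†`, which is maximally mixed because `U₁ ⊗ U₂`
has the second moments `E[U_ip Ū_jq] = δ_ij δ_pq / d` of a Haar unitary; on a maximally mixed input
that trace is exactly `tr (P + N)`. -/

open scoped MatrixOrder Kronecker

lemma Matrix.mul_mul_conjTranspose_apply {l m : Type*} [Fintype m] (V : Matrix l m ℂ)
    (M : Matrix m m ℂ) (a b : l) :
    (V * M * Vᴴ) a b = ∑ i, ∑ j, M i j * (V a i * star (V b j)) := by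
  simp only [mul_apply, conjTranspose_apply, Finset.sum_mul]
  rw [Finset.sum_comm]
  exact Finset.sum_congr rfl fun _ _ => Finset.sum_congr rfl fun _ _ => by ring

lemma Matrix.apply_eq_of_forall_unitary_conj {M : Matrix n n ℂ}
    (hM : ∀ V ∈ unitaryGroup n ℂ, V * M * star V = M) (i j : n) :
    M i j = if i = j then M.trace / Fintype.card n else 0 := by
  split_ifs with hij
  · subst hij
    have : Nonempty n := ⟨i⟩
    have hdiag : ∀ k, M k k = M i i := by
      intro k
      have hP : (Equiv.swap i k).permMatrix ℂ ∈ unitaryGroup n ℂ := by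
        rw [mem_unitaryGroup_iff, star_eq_conjTranspose, conjTranspose_permMatrix,
          ← permMatrix_mul, inv_mul_cancel, permMatrix_one]
      have := congrFun (congrFun (hM _ hP) i) i
      rw [star_eq_conjTranspose, conjTranspose_permMatrix, PEquiv.toMatrix_toPEquiv_mul,
        PEquiv.mul_toMatrix_toPEquiv] at this
      simpa using this
    have hcard : (Fintype.card n : ℂ) ≠ 0 := Nat.cast_ne_zero.mpr Fintype.card_ne_zero
    simp only [trace, diag_apply, hdiag]
    rw [Finset.sum_const, Finset.card_univ, nsmul_eq_mul, mul_div_cancel_left₀ _ hcard]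
  · -- conjugating by the sign flip at `j` negates the entry `(i, j)`
    let D : Matrix n n ℂ := diagonal fun k => if k = j then -1 else 1
    have hD : D ∈ unitaryGroup n ℂ := by
      rw [mem_unitaryGroup_iff, star_eq_conjTranspose, diagonal_conjTranspose,
        diagonal_mul_diagonal, ← diagonal_one]
      congr 1
      ext k
      by_cases hk : k = j <;> simp [hk]
    have := congrFun (congrFun (hM D hD) i) j
    simp only [D, star_eq_conjTranspose, diagonal_conjTranspose, diagonal_mul, mul_diagonal,
      Pi.star_apply, hij, if_true, if_false, mul_one, star_neg, star_one, mul_neg] at this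
    linear_combination -this / 2

section TraceNorm

lemma Matrix.IsHermitian.trace_cfc {A : Matrix n n ℂ} (hA : A.IsHermitian) (f : ℝ → ℝ) :
    (hA.cfc f).trace = ∑ i, (f (hA.eigenvalues i) : ℂ) := by
  rw [IsHermitian.cfc, Unitary.conjStarAlgAut_apply, trace_mul_cycle, Unitary.coe_star_mul_self,
    one_mul, trace_diagonal]
  rfl

lemma trNorm_eq_re_trace_abs (M : Matrix n n ℂ) : trNorm M = (CFC.abs M).trace.re := by
  have hM := posSemidef_conjTranspose_mul_self M
  rw [CFC.abs, star_eq_conjTranspose, CFC.sqrt_eq_real_sqrt _ hM.nonneg, cfcₙ_eq_cfc,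
    hM.1.cfc_eq, IsHermitian.cfc, Unitary.conjStarAlgAut_apply]
  rfl

lemma trNorm_nonneg (M : Matrix n n ℂ) : 0 ≤ trNorm M := by
  rw [trNorm_eq_re_trace_abs]
  exact (Complex.nonneg_iff.mp (CFC.abs_nonneg M).posSemidef.trace_nonneg).1

lemma Matrix.IsHermitian.trNorm_eq_sum_abs_eigenvalues {A : Matrix n n ℂ} (hA : A.IsHermitian) :
    trNorm A = ∑ i, |hA.eigenvalues i| := by
  rw [trNorm_eq_re_trace_abs, CFC.abs_eq_cfcₙ_norm A hA.isSelfAdjoint, cfcₙ_eq_cfc,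
    hA.cfc_eq, hA.trace_cfc, Complex.re_sum]
  simp

lemma Matrix.IsHermitian.exists_posSemidef_sub_eq {Δ : Matrix n n ℂ} (hΔ : Δ.IsHermitian) :
    ∃ P N : Matrix n n ℂ, P.PosSemidef ∧ N.PosSemidef ∧ P - N = Δ ∧
      P.trace.re + N.trace.re = trNorm Δ :=
  ⟨Δ⁺, Δ⁻, (CFC.posPart_nonneg Δ).posSemidef, (CFC.negPart_nonneg Δ).posSemidef,
    CFC.posPart_sub_negPart Δ hΔ.isSelfAdjoint, by
      rw [trNorm_eq_re_trace_abs, ← CFC.posPart_add_negPart Δ hΔ.isSelfAdjoint, trace_add,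
        Complex.add_re]⟩

lemma Matrix.PosSemidef.trNorm_sub_le {X Y : Matrix n n ℂ} (hX : X.PosSemidef)
    (hY : Y.PosSemidef) : trNorm (X - Y) ≤ X.trace.re + Y.trace.re := by
  have hΔ := hX.1.sub hY.1
  set U : Matrix n n ℂ := (hΔ.eigenvectorUnitary : Matrix n n ℂ)
  have hdiag : Uᴴ * (X - Y) * U = diagonal (RCLike.ofReal ∘ hΔ.eigenvalues) := by
    rw [← star_eq_conjTranspose, ← hΔ.conjStarAlgAut_star_eigenvectorUnitary,
      Unitary.conjStarAlgAut_star_apply]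
  have hX' := hX.conjTranspose_mul_mul_same U
  have hY' := hY.conjTranspose_mul_mul_same U
  have htrace : ∀ Z : Matrix n n ℂ, (Uᴴ * Z * U).trace = Z.trace := fun Z => by
    rw [trace_mul_cycle, ← star_eq_conjTranspose, mem_unitaryGroup_iff.mp hΔ.eigenvectorUnitary.2,
      one_mul]
  -- each eigenvalue of `X - Y` is a difference of diagonal entries of `X, Y ⪰ 0` in the eigenbasis
  have heig : ∀ i, |hΔ.eigenvalues i| ≤ ((Uᴴ * X * U) i i).re + ((Uᴴ * Y * U) i i).re := by
    intro i
    have hi : hΔ.eigenvalues i = ((Uᴴ * X * U) i i).re - ((Uᴴ * Y * U) i i).re := by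
      rw [← Complex.sub_re, ← Matrix.sub_apply, ← sub_mul, ← mul_sub, hdiag]
      simp
    rw [hi]
    refine (abs_sub _ _).trans_eq ?_
    rw [abs_of_nonneg (Complex.nonneg_iff.mp hX'.diag_nonneg).1,
      abs_of_nonneg (Complex.nonneg_iff.mp hY'.diag_nonneg).1]
  calc trNorm (X - Y) = ∑ i, |hΔ.eigenvalues i| := hΔ.trNorm_eq_sum_abs_eigenvalues
    _ ≤ ∑ i, (((Uᴴ * X * U) i i).re + ((Uᴴ * Y * U) i i).re) :=
      Finset.sum_le_sum fun i _ => heig i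
    _ = X.trace.re + Y.trace.re := by
      rw [Finset.sum_add_distrib, ← Complex.re_sum, ← Complex.re_sum]
      exact congrArg₂ (·.re + ·.re) (htrace X) (htrace Y)

end TraceNorm

section PartialTrace

variable {A R : Type*} [Fintype R]

def ptrSnd (M : Matrix (A × R) (A × R) ℂ) : Matrix A A ℂ := of fun i j => ∑ r, M (i, r) (j, r)

lemma trace_ptrSnd [Fintype A] (M : Matrix (A × R) (A × R) ℂ) : (ptrSnd M).trace = M.trace := by
  simp only [trace, diag_apply, ptrSnd, of_apply, Fintype.sum_prod_type]

lemma ptrSnd_kronecker_one_conj [Fintype A] [DecidableEq R] (K : Matrix A A ℂ)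
    (M : Matrix (A × R) (A × R) ℂ) :
    ptrSnd ((K ⊗ₖ (1 : Matrix R R ℂ)) * M * (K ⊗ₖ (1 : Matrix R R ℂ))ᴴ) = K * ptrSnd M * Kᴴ := by
  ext i j
  simp only [ptrSnd, mul_mul_conjTranspose_apply, kroneckerMap_apply, one_apply, mul_ite, mul_one,
    mul_zero, RCLike.star_def, apply_ite (starRingEnd ℂ), map_zero, ite_mul, zero_mul,
    Finset.sum_ite_irrel, Fintype.sum_prod_type, Finset.sum_const_zero, Finset.sum_ite_eq,
    Finset.mem_univ, if_true, of_apply, Finset.sum_mul]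
  rw [Finset.sum_comm]
  exact Finset.sum_congr rfl fun _ _ => Finset.sum_comm

end PartialTrace

lemma conjU_eq_kronecker {n₁ n₂ R : Type*} [Fintype n₁] [Fintype n₂] [Fintype R] [DecidableEq R]
    (U₁ : Matrix n₁ n₁ ℂ) (U₂ : Matrix n₂ n₂ ℂ) (ρ : Matrix ((n₁ × n₂) × R) ((n₁ × n₂) × R) ℂ) :
    conjU U₁ U₂ ρ = (U₁ ⊗ₖ U₂ ⊗ₖ (1 : Matrix R R ℂ)) * ρ * (U₁ ⊗ₖ U₂ ⊗ₖ (1 : Matrix R R ℂ))ᴴ := by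
  have hbig : bigUR (R := R) U₁ U₂ = U₁ ⊗ₖ U₂ ⊗ₖ (1 : Matrix R R ℂ) := by
    ext z w
    simp [bigUR, one_apply]
  rw [conjU, hbig]

section ChoiApply

variable {A B R : Type*} [Fintype A] [DecidableEq A] [Fintype B] [Fintype R]

lemma choi_sub (T T' : Matrix A A ℂ →ₗ[ℂ] Matrix B B ℂ) : choi (T' - T) = choi T' - choi T := by
  ext z w
  simp only [choi, LinearMap.sub_apply, Matrix.sub_apply, mul_sub]

variable [DecidableEq B] [DecidableEq R]

def entangledEmbedding (A B R : Type*) [DecidableEq A] [DecidableEq B] [DecidableEq R] :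
    Matrix ((A × B) × (A × R)) (B × R) ℂ :=
  of fun x z => if x.1.1 = x.2.1 ∧ x.1.2 = z.1 ∧ x.2.2 = z.2 then 1 else 0

/-- `(Φ ⊗ id) σ` for the map `Φ` whose normalized Choi matrix is `C`, written as a compression of
`C ⊗ σ` so that complete positivity is inherited from `C ⊗ σ ⪰ 0`. -/
def choiApply (C : Matrix (A × B) (A × B) ℂ) (σ : Matrix (A × R) (A × R) ℂ) :
    Matrix (B × R) (B × R) ℂ :=
  (Fintype.card A : ℂ) • ((entangledEmbedding A B R)ᴴ * (C ⊗ₖ σ) * entangledEmbedding A B R)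

lemma choiApply_apply (C : Matrix (A × B) (A × B) ℂ) (σ : Matrix (A × R) (A × R) ℂ)
    (z w : B × R) :
    choiApply C σ z w =
      Fintype.card A * ∑ i, ∑ j, C (i, z.1) (j, w.1) * σ (i, z.2) (j, w.2) := by
  simp only [choiApply, entangledEmbedding, ite_and, Matrix.smul_apply, mul_apply,
    conjTranspose_apply, of_apply, RCLike.star_def, apply_ite (starRingEnd ℂ), map_one, map_zero,
    kroneckerMap_apply, ite_mul, one_mul, zero_mul, Fintype.sum_prod_type, Finset.sum_ite_irrel,
    Finset.sum_ite_eq', Finset.mem_univ, if_true, Finset.sum_const_zero, Finset.sum_ite_eq, mul_ite,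
    mul_one, mul_zero, smul_eq_mul]
  rw [Finset.sum_comm]

lemma tensId_eq_choiApply (T : Matrix A A ℂ →ₗ[ℂ] Matrix B B ℂ) (σ : Matrix (A × R) (A × R) ℂ) :
    tensId T σ = choiApply (choi T) σ := by
  ext z w
  rw [choiApply_apply, tensId]
  rcases isEmpty_or_nonempty A with hA | hA
  · simp
  · simp only [choi, Finset.mul_sum, ← mul_assoc,
      mul_inv_cancel₀ (Nat.cast_ne_zero.mpr Fintype.card_ne_zero : (Fintype.card A : ℂ) ≠ 0),
      one_mul]

lemma choiApply_add (C C' : Matrix (A × B) (A × B) ℂ) (σ : Matrix (A × R) (A × R) ℂ) :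
    choiApply (C + C') σ = choiApply C σ + choiApply C' σ := by
  simp only [choiApply, add_kronecker, Matrix.mul_add, Matrix.add_mul, smul_add]

lemma choiApply_sub (C C' : Matrix (A × B) (A × B) ℂ) (σ : Matrix (A × R) (A × R) ℂ) :
    choiApply (C - C') σ = choiApply C σ - choiApply C' σ := by
  rw [eq_sub_iff_add_eq, ← choiApply_add, sub_add_cancel]

lemma Matrix.PosSemidef.choiApply {C : Matrix (A × B) (A × B) ℂ}
    {σ : Matrix (A × R) (A × R) ℂ} (hC : C.PosSemidef) (hσ : σ.PosSemidef) :
    (choiApply C σ).PosSemidef :=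
  ((hC.kronecker hσ).conjTranspose_mul_mul_same _).smul (Nat.cast_nonneg _)

lemma trace_choiApply (C : Matrix (A × B) (A × B) ℂ) (σ : Matrix (A × R) (A × R) ℂ) :
    (choiApply C σ).trace = Fintype.card A * ∑ i, ∑ j, ptrSnd C i j * ptrSnd σ i j := by
  simp only [trace, diag_apply, choiApply_apply, ← Finset.mul_sum, ptrSnd, of_apply]
  congr 1
  rw [Finset.sum_comm]
  refine Finset.sum_congr rfl fun i _ => ?_
  rw [Finset.sum_comm]
  refine Finset.sum_congr rfl fun j _ => ?_
  rw [Finset.sum_mul_sum, Fintype.sum_prod_type]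

lemma trNorm_choiApply_sub_le {P N : Matrix (A × B) (A × B) ℂ} {σ : Matrix (A × R) (A × R) ℂ}
    (hP : P.PosSemidef) (hN : N.PosSemidef) (hσ : σ.PosSemidef) :
    trNorm (choiApply (P - N) σ) ≤ (choiApply (P + N) σ).trace.re := by
  rw [choiApply_sub, choiApply_add, trace_add, Complex.add_re]
  exact (hP.choiApply hσ).trNorm_sub_le (hN.choiApply hσ)

end ChoiApply

section Integrals

variable {α β : Type*} [MeasurableSpace α] [MeasurableSpace β]

lemma integral_sum_sum {ι κ : Type*} [Fintype ι] [Fintype κ] {μ : Measure α}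
    {f : ι → κ → α → ℂ} (hf : ∀ i j, Integrable (f i j) μ) :
    ∫ a, ∑ i, ∑ j, f i j a ∂μ = ∑ i, ∑ j, ∫ a, f i j a ∂μ := by
  rw [integral_finsetSum _ fun i _ => integrable_finsetSum _ fun j _ => hf i j]
  exact Finset.sum_congr rfl fun i _ => integral_finsetSum _ fun j _ => hf i j

lemma integral_integral_le_integral_prod {μ : Measure α} {ν : Measure β} [SFinite μ] [SFinite ν]
    {f : α → β → ℝ} {g : α × β → ℝ} (hf : ∀ a b, 0 ≤ f a b) (hfg : ∀ a b, f a b ≤ g (a, b))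
    (hg : Integrable g (μ.prod ν)) : ∫ a, ∫ b, f a b ∂ν ∂μ ≤ ∫ z, g z ∂μ.prod ν := by
  rw [integral_prod g hg]
  refine integral_mono_of_nonneg (ae_of_all _ fun a => integral_nonneg (hf a))
    hg.integral_prod_left ?_
  filter_upwards [hg.prod_right_ae] with a ha
  exact integral_mono_of_nonneg (ae_of_all _ (hf a)) ha (ae_of_all _ (hfg a))

end Integrals

/-- The random matrix `κ` has the second moments `E[κ_ip conj κ_jq] = δ_ij δ_pq / d` of a Haar
unitary, i.e. it is a unitary 1-design. -/
def IsOneDesign {Ω : Type*} [MeasurableSpace Ω] (ν : Measure Ω) (κ : Ω → Matrix n n ℂ) : Prop :=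
  ∀ i p j q, Integrable (fun ω => κ ω i p * star (κ ω j q)) ν ∧
    ∫ ω, κ ω i p * star (κ ω j q) ∂ν = if i = j ∧ p = q then (Fintype.card n : ℂ)⁻¹ else 0

namespace IsOneDesign

variable {Ω : Type*} [MeasurableSpace Ω] {ν : Measure Ω} {κ : Ω → Matrix n n ℂ}

lemma integrable_conj_apply (hκ : IsOneDesign ν κ) (X : Matrix n n ℂ) (i j : n) :
    Integrable (fun ω => (κ ω * X * (κ ω)ᴴ) i j) ν := by
  simp_rw [mul_mul_conjTranspose_apply]
  exact integrable_finsetSum _ fun p _ => integrable_finsetSum _ fun q _ =>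
    (hκ i p j q).1.const_mul _

lemma integral_conj_apply (hκ : IsOneDesign ν κ) (X : Matrix n n ℂ) (i j : n) :
    ∫ ω, (κ ω * X * (κ ω)ᴴ) i j ∂ν = if i = j then X.trace / Fintype.card n else 0 := by
  simp_rw [mul_mul_conjTranspose_apply]
  rw [integral_sum_sum (f := fun p q ω => X p q * (κ ω i p * star (κ ω j q)))
    fun p q => (hκ i p j q).1.const_mul _]
  simp_rw [integral_const_mul, (hκ i _ j _).2]
  split_ifs with hij
  · simp [hij, trace, div_eq_mul_inv, Finset.sum_mul]
  · simp [hij]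

lemma kronecker {Ω' m : Type*} [MeasurableSpace Ω'] [Fintype m] [DecidableEq m]
    [SFinite ν] {ν' : Measure Ω'} [SFinite ν'] {κ' : Ω' → Matrix m m ℂ}
    (hκ : IsOneDesign ν κ) (hκ' : IsOneDesign ν' κ') :
    IsOneDesign (ν.prod ν') fun ω => κ ω.1 ⊗ₖ κ' ω.2 := by
  intro i p j q
  have hsplit : ∀ ω : Ω × Ω', (κ ω.1 ⊗ₖ κ' ω.2) i p * star ((κ ω.1 ⊗ₖ κ' ω.2) j q) =
      (κ ω.1 i.1 p.1 * star (κ ω.1 j.1 q.1)) * (κ' ω.2 i.2 p.2 * star (κ' ω.2 j.2 q.2)) :=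
    fun ω => by simp only [kroneckerMap_apply, star_mul']; ring
  simp_rw [hsplit]
  refine ⟨(hκ _ _ _ _).1.mul_prod (hκ' _ _ _ _).1, ?_⟩
  rw [integral_prod_mul (fun ω => κ ω i.1 p.1 * star (κ ω j.1 q.1))
    (fun ω => κ' ω i.2 p.2 * star (κ' ω j.2 q.2)), (hκ _ _ _ _).2, (hκ' _ _ _ _).2,
    Fintype.card_prod, Nat.cast_mul, mul_inv]
  simp only [Prod.ext_iff]
  split_ifs <;> simp_all

lemma integral_trace_choiApply_conj {B R : Type*} [Fintype B] [DecidableEq B]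
    [Fintype R] [DecidableEq R] {κ : Ω → Matrix n n ℂ} (hκ : IsOneDesign ν κ)
    (C : Matrix (n × B) (n × B) ℂ) (ρ : Matrix (n × R) (n × R) ℂ) :
    Integrable (fun ω => (choiApply C ((κ ω ⊗ₖ 1) * ρ * (κ ω ⊗ₖ 1)ᴴ)).trace) ν ∧
      ∫ ω, (choiApply C ((κ ω ⊗ₖ 1) * ρ * (κ ω ⊗ₖ 1)ᴴ)).trace ∂ν = C.trace * ρ.trace := by
  simp_rw [trace_choiApply, ptrSnd_kronecker_one_conj]
  refine ⟨(integrable_finsetSum _ fun i _ => integrable_finsetSum _ fun j _ =>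
    (hκ.integrable_conj_apply _ i j).const_mul _).const_mul _, ?_⟩
  rw [integral_const_mul, integral_sum_sum (f := fun i j ω =>
      ptrSnd C i j * (κ ω * ptrSnd ρ * (κ ω)ᴴ) i j)
    fun i j => (hκ.integrable_conj_apply _ i j).const_mul _]
  simp_rw [integral_const_mul, hκ.integral_conj_apply, mul_ite, mul_zero, Finset.sum_ite_eq,
    Finset.mem_univ, if_true, trace_ptrSnd]
  simp only [← Finset.sum_mul]
  rw [show ∑ i, ptrSnd C i i = C.trace from trace_ptrSnd C]
  rcases isEmpty_or_nonempty n with hn | hn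
  · simp
  · field_simp

end IsOneDesign

section Haar

variable {μ : Measure (unitaryGroup n ℂ)}

@[fun_prop]
lemma measurable_unitaryGroup_apply (i j : n) :
    Measurable fun U : unitaryGroup n ℂ => (U : Matrix n n ℂ) i j :=
  (measurable_pi_apply j).comp ((measurable_pi_apply i).comp measurable_subtype_coe)

lemma measurable_unitaryGroup_mul_left (V : unitaryGroup n ℂ) :
    Measurable fun U : unitaryGroup n ℂ => V * U := by
  refine Measurable.subtype_mk (measurable_pi_lambda _ fun a => measurable_pi_lambda _ fun b => ?_)
  simp only [mul_apply]
  exact Finset.measurable_sum _ fun k _ => measurable_const.mul (measurable_unitaryGroup_apply k b)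

lemma integrable_unitaryGroup_apply_mul_star [IsFiniteMeasure μ] (i p j q : n) :
    Integrable (fun U : unitaryGroup n ℂ =>
      (U : Matrix n n ℂ) i p * star ((U : Matrix n n ℂ) j q)) μ :=
  Integrable.of_bound (Measurable.aestronglyMeasurable (by fun_prop)) 1
    (ae_of_all _ fun U => by
      rw [norm_mul, norm_star]
      exact mul_le_one₀ (entry_norm_bound_of_unitary U.2 i p) (norm_nonneg _)
        (entry_norm_bound_of_unitary U.2 j q))

lemma integral_unitaryGroup_mul_left (hμ : ∀ V : unitaryGroup n ℂ, μ.map (fun U => V * U) = μ)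
    (V : unitaryGroup n ℂ) {f : unitaryGroup n ℂ → ℂ} (hf : Measurable f) :
    ∫ U, f (V * U) ∂μ = ∫ U, f U ∂μ := by
  conv_rhs => rw [← hμ V]
  exact (integral_map (measurable_unitaryGroup_mul_left V).aemeasurable
    hf.aestronglyMeasurable).symm

/-- The moment matrix `E[U e_p e_qᴴ Uᴴ]` is invariant under unitary conjugation, hence scalar,
and its trace is `δ_pq`. -/
theorem isOneDesign_of_map_mul_left [IsProbabilityMeasure μ]
    (hμ : ∀ V : unitaryGroup n ℂ, μ.map (fun U => V * U) = μ) :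
    IsOneDesign μ fun U : unitaryGroup n ℂ => (U : Matrix n n ℂ) := by
  intro i p j q
  refine ⟨integrable_unitaryGroup_apply_mul_star i p j q, ?_⟩
  let M : Matrix n n ℂ := of fun i j =>
    ∫ U : unitaryGroup n ℂ, (U : Matrix n n ℂ) i p * star ((U : Matrix n n ℂ) j q) ∂μ
  have hM : ∀ V ∈ unitaryGroup n ℂ, V * M * star V = M := by
    intro V hV
    ext a b
    rw [star_eq_conjTranspose, mul_mul_conjTranspose_apply]
    simp only [M, of_apply, ← integral_mul_const]
    rw [← integral_sum_sum fun i j =>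
      (integrable_unitaryGroup_apply_mul_star i p j q).mul_const _]
    calc _ = ∫ U : unitaryGroup n ℂ, ((⟨V, hV⟩ * U : unitaryGroup n ℂ) : Matrix n n ℂ) a p *
          star (((⟨V, hV⟩ * U : unitaryGroup n ℂ) : Matrix n n ℂ) b q) ∂μ := by
          refine integral_congr_ae (ae_of_all _ fun U => ?_)
          simp only [Submonoid.coe_mul, mul_apply, star_sum, Finset.sum_mul_sum, star_mul']
          exact Finset.sum_congr rfl fun _ _ => Finset.sum_congr rfl fun _ _ => by ring
      _ = _ := integral_unitaryGroup_mul_left hμ ⟨V, hV⟩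
          (f := fun U => (U : Matrix n n ℂ) a p * star ((U : Matrix n n ℂ) b q)) (by fun_prop)
  have htr : M.trace = if p = q then 1 else 0 := by
    simp only [trace, diag_apply, M, of_apply]
    rw [← integral_finsetSum _ fun i _ => integrable_unitaryGroup_apply_mul_star i p i q]
    have hcol : ∀ U : unitaryGroup n ℂ,
        ∑ i, (U : Matrix n n ℂ) i p * star ((U : Matrix n n ℂ) i q) = if p = q then 1 else 0 := by
      intro U
      have := congrFun (congrFun (mem_unitaryGroup_iff'.mp U.2) q) p
      simp only [mul_apply, star_apply, one_apply] at this
      convert this using 1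
      · exact Finset.sum_congr rfl fun _ _ => mul_comm _ _
      · exact if_congr eq_comm rfl rfl
    rw [integral_congr_ae (ae_of_all _ hcol)]
    simp
  have := apply_eq_of_forall_unitary_conj hM i j
  simp only [M, of_apply] at this
  rw [this, htr]
  split_ifs <;> simp_all

end Haar

/-- Perturbation stability of decoupling under smoothing of the superoperator:
if the Choi states of the completely positive maps `T, T'` are `ε`-close in trace
distance, then the Haar-expected trace distance of the outputs is at most `ε`. -/
theorem decoupling_perturbation {n₁ n₂ bB R : Type*}
    [Fintype n₁] [DecidableEq n₁] [Fintype n₂] [DecidableEq n₂]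
    [Fintype bB] [DecidableEq bB] [Fintype R] [DecidableEq R] {ε : ℝ}
    (T T' : Matrix ((n₁ × n₂)) ((n₁ × n₂)) ℂ →ₗ[ℂ] Matrix bB bB ℂ)
    (hT : (choi T).PosSemidef) (hT' : (choi T').PosSemidef)
    (hclose : trNorm (choi T' - choi T) ≤ ε)
    (ρ : Matrix ((n₁ × n₂) × R) ((n₁ × n₂) × R) ℂ) (hρ : ρ.PosSemidef) (hρ1 : ρ.trace = 1)
    (μ₁ : Measure (Matrix.unitaryGroup n₁ ℂ)) [IsProbabilityMeasure μ₁]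
    (μ₂ : Measure (Matrix.unitaryGroup n₂ ℂ)) [IsProbabilityMeasure μ₂]
    (hμ₁ : ∀ V : Matrix.unitaryGroup n₁ ℂ, μ₁.map (fun U => V * U) = μ₁)
    (hμ₂ : ∀ V : Matrix.unitaryGroup n₂ ℂ, μ₂.map (fun U => V * U) = μ₂) :
    (∫ U₁, ∫ U₂,
        trNorm (tensId (T' - T)
          (conjU (U₁ : Matrix n₁ n₁ ℂ) (U₂ : Matrix n₂ n₂ ℂ) ρ)) ∂μ₂ ∂μ₁) ≤ ε := by
  obtain ⟨P, N, hP, hN, hPN, htr⟩ := (hT'.1.sub hT.1).exists_posSemidef_sub_eq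
  obtain ⟨hint, hval⟩ := ((isOneDesign_of_map_mul_left hμ₁).kronecker
    (isOneDesign_of_map_mul_left hμ₂)).integral_trace_choiApply_conj (B := bB) (P + N) ρ
  simp_rw [← conjU_eq_kronecker] at hint hval
  have hbound : ∀ (U₁ : unitaryGroup n₁ ℂ) (U₂ : unitaryGroup n₂ ℂ),
      trNorm (tensId (T' - T) (conjU (U₁ : Matrix n₁ n₁ ℂ) (U₂ : Matrix n₂ n₂ ℂ) ρ)) ≤
        (choiApply (P + N) (conjU (U₁ : Matrix n₁ n₁ ℂ) (U₂ : Matrix n₂ n₂ ℂ) ρ)).trace.re := by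
    intro U₁ U₂
    rw [tensId_eq_choiApply, choi_sub, ← hPN]
    exact trNorm_choiApply_sub_le hP hN (hρ.mul_mul_conjTranspose_same _)
  calc _ ≤ ∫ z, (choiApply (P + N)
          (conjU (z.1 : Matrix n₁ n₁ ℂ) (z.2 : Matrix n₂ n₂ ℂ) ρ)).trace.re ∂μ₁.prod μ₂ :=
        integral_integral_le_integral_prod (fun _ _ => trNorm_nonneg _) hbound hint.re
    _ = ((P + N).trace * ρ.trace).re := by rw [← hval]; exact integral_re hint
    _ ≤ ε := by rwa [hρ1, mul_one, trace_add, Complex.add_re, htr]
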